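/- arXiv:1411.2168 — 4 statements merged into one kernel-verified Lean document; each statement's English description precedes it below -/
import Mathlib

section
/- Let f₁, f₂ : ℝ^m × ℝ^n → ℝ be twice continuously differentiable and define the game vector field ω(x,y) = (∇ₓ f₁(x,y), ∇_y f₂(x,y)) : ℝ^{m+n} → ℝ^{m+n}. If (x*, y*) is a differential Nash equilibrium and the Jacobian dω(x*, y*) is invertible, then (x*, y*) is an isolated zero of ω: there is a neighborhood W of (x*, y*) in which (x*, y*) is the only zero of ω; in particular, it is the only local Nash equilibrium in W. -/
/-!
Since f₁ and f₂ are C², the game vector field ω is C¹, hence differentiable at (x*, y*). Its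
derivative there is an injective linear map on a finite-dimensional space, so it is bounded below,
‖dω v‖ ≥ c ‖v‖ with c > 0; the first-order Taylor remainder is o(‖v‖), so ω(q) ≠ ω(x*, y*) = 0 for
every q ≠ (x*, y*) close enough to (x*, y*).
-/

open Filter Topology

protected theorem ContDiff.gradient {E F : Type*} [NormedAddCommGroup E] [NormedSpace ℝ E]
    [NormedAddCommGroup F] [InnerProductSpace ℝ F] [CompleteSpace F]
    {f : E → F → ℝ} {g : E → F} {k l : WithTop ℕ∞}
    (hf : ContDiff ℝ k (Function.uncurry f)) (hg : ContDiff ℝ l g) (hlk : l + 1 ≤ k) :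
    ContDiff ℝ l fun p => gradient (f p) (g p) :=
  (InnerProductSpace.toDual ℝ F).symm.contDiff.comp (hf.fderiv hg hlk)

theorem HasFDerivAt.eventually_ne_of_injective {𝕜 E F : Type*} [NontriviallyNormedField 𝕜]
    [CompleteSpace 𝕜] [NormedAddCommGroup E] [NormedSpace 𝕜 E] [FiniteDimensional 𝕜 E]
    [NormedAddCommGroup F] [NormedSpace 𝕜 F] {f : E → F} {f' : E →L[𝕜] F} {a : E}
    (hf : HasFDerivAt f f' a) (hf' : Function.Injective f') : ∀ᶠ z in 𝓝[≠] a, f z ≠ f a :=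
  have ⟨K, _, hK⟩ := (f' : E →ₗ[𝕜] F).injective_iff_antilipschitz.mp hf'
  hf.eventually_ne ⟨K, hK⟩

theorem stmt_6_general
    (m n : ℕ)
    (f₁ f₂ : EuclideanSpace ℝ (Fin m) → EuclideanSpace ℝ (Fin n) → ℝ)
    (hf₁ : ContDiff ℝ 2 (fun p : EuclideanSpace ℝ (Fin m) × EuclideanSpace ℝ (Fin n) => f₁ p.1 p.2))
    (hf₂ : ContDiff ℝ 2 (fun p : EuclideanSpace ℝ (Fin m) × EuclideanSpace ℝ (Fin n) => f₂ p.1 p.2))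
    (ω : EuclideanSpace ℝ (Fin m) × EuclideanSpace ℝ (Fin n) →
         EuclideanSpace ℝ (Fin m) × EuclideanSpace ℝ (Fin n))
    (hω : ∀ p, ω p = (gradient (fun x => f₁ x p.2) p.1, gradient (fun y => f₂ p.1 y) p.2))
    (x : EuclideanSpace ℝ (Fin m)) (y : EuclideanSpace ℝ (Fin n))
    (hzero : ω (x, y) = 0)
    (hinv : Function.Bijective (fderiv ℝ ω (x, y))) :
    ∃ W ∈ nhds ((x, y) : EuclideanSpace ℝ (Fin m) × EuclideanSpace ℝ (Fin n)),
      ∀ q ∈ W, ω q = 0 → q = (x, y) := by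
  have hC1 : ContDiff ℝ 1 ω := by
    rw [funext hω]
    refine .prodMk (.gradient (f := fun p x => f₁ x p.2) ?_ contDiff_fst le_rfl)
      (.gradient (f := fun p y => f₂ p.1 y) ?_ contDiff_snd le_rfl)
    · exact hf₁.comp (contDiff_snd.prodMk (contDiff_snd.comp contDiff_fst))
    · exact hf₂.comp ((contDiff_fst.comp contDiff_fst).prodMk contDiff_snd)
  have hne := (hC1.differentiable one_ne_zero (x, y)).hasFDerivAt.eventually_ne_of_injective
    hinv.injective
  obtain ⟨W, hW, hWne⟩ := (eventually_nhdsWithin_iff.mp hne).exists_mem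
  exact ⟨W, hW, fun q hq hq0 => by_contra fun hqne => hWne q hq hqne (hq0.trans hzero.symm)⟩

theorem stmt_6
    (m n : ℕ)
    (f₁ f₂ : EuclideanSpace ℝ (Fin m) → EuclideanSpace ℝ (Fin n) → ℝ)
    (hf₁ : ContDiff ℝ 2 (fun p : EuclideanSpace ℝ (Fin m) × EuclideanSpace ℝ (Fin n) => f₁ p.1 p.2))
    (hf₂ : ContDiff ℝ 2 (fun p : EuclideanSpace ℝ (Fin m) × EuclideanSpace ℝ (Fin n) => f₂ p.1 p.2))
    (ω : EuclideanSpace ℝ (Fin m) × EuclideanSpace ℝ (Fin n) →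
         EuclideanSpace ℝ (Fin m) × EuclideanSpace ℝ (Fin n))
    (hω : ∀ p, ω p = (gradient (fun x => f₁ x p.2) p.1, gradient (fun y => f₂ p.1 y) p.2))
    (x : EuclideanSpace ℝ (Fin m)) (y : EuclideanSpace ℝ (Fin n))
    (hzero : ω (x, y) = 0)
    (hH₁ : ∀ v : EuclideanSpace ℝ (Fin m), v ≠ 0 →
      0 < (inner ℝ (fderiv ℝ (fun x' => gradient (fun x'' => f₁ x'' y) x') x v) v : ℝ))
    (hH₂ : ∀ w : EuclideanSpace ℝ (Fin n), w ≠ 0 →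
      0 < (inner ℝ (fderiv ℝ (fun y' => gradient (fun y'' => f₂ x y'') y') y w) w : ℝ))
    (hinv : Function.Bijective (fderiv ℝ ω (x, y))) :
    ∃ W ∈ nhds ((x, y) : EuclideanSpace ℝ (Fin m) × EuclideanSpace ℝ (Fin n)),
      ∀ q ∈ W, ω q = 0 → q = (x, y) :=
  stmt_6_general m n f₁ f₂ hf₁ hf₂ ω hω x y hzero hinv
end

section
/- Let f₁, f₂, ζ₁, ζ₂ : ℝ^m × ℝ^n → ℝ be smooth (C^∞), and suppose (x*, y*) is a non-degenerate differential Nash equilibrium of (f₁, f₂), i.e., ω(x*,y*) = 0 with ω(x,y) = (∇ₓf₁(x,y), ∇_y f₂(x,y)), the partial Hessians D²ₓₓf₁ and D²_yy f₂ positive definite at (x*,y*), and the Jacobian dω(x*,y*) invertible. Then there exist a neighborhood U ⊆ ℝ of 0, a neighborhood W ⊆ ℝ^{m+n} of (x*,y*), and a smooth map σ : U → W with σ(0) = (x*,y*), such that for each s ∈ U, σ(s) is the unique zero in W of the perturbed game vector field ω_s(x,y) = (∇ₓ(f₁+sζ₁)(x,y), ∇_y(f₂+sζ₂)(x,y)),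 and moreover dω_s(σ(s)) is invertible. -/
open ContinuousLinearMap Set Filter Topology

private lemma aux_isUnit_iff {V : Type*} [NormedAddCommGroup V] [NormedSpace ℝ V]
    [FiniteDimensional ℝ V] (T : V →L[ℝ] V) : IsUnit T ↔ Function.Bijective T := by
  constructor
  · rintro ⟨u, rfl⟩
    have h := (ContinuousLinearEquiv.unitsEquiv ℝ V u).bijective
    have he : ⇑(ContinuousLinearEquiv.unitsEquiv ℝ V u) = ⇑(u : V →L[ℝ] V) := rfl
    rwa [he] at h
  · intro h
    exact ⟨((LinearEquiv.ofBijective (T : V →ₗ[ℝ] V) h).toContinuousLinearEquiv).toUnit,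
      by ext z; rfl⟩

private lemma aux_block_bij {V : Type*} [NormedAddCommGroup V] [NormedSpace ℝ V]
    (D : ℝ × V →L[ℝ] V) :
    Function.Bijective ((ContinuousLinearMap.fst ℝ ℝ V).prod D) ↔
      Function.Bijective (D.comp (ContinuousLinearMap.inr ℝ ℝ V)) := by
  have hBD : ∀ v : V, D.comp (ContinuousLinearMap.inr ℝ ℝ V) v = D (0, v) := fun v => rfl
  have hsplit : ∀ z : ℝ × V, D z = D (z.1, 0) + D (0, z.2) := by
    intro z
    rw [← map_add]
    congr 1
    ext <;> simp
  constructor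
  · intro hP
    constructor
    · intro u v huv
      rw [hBD, hBD] at huv
      have h0 : ((ContinuousLinearMap.fst ℝ ℝ V).prod D) ((0:ℝ), u)
          = ((ContinuousLinearMap.fst ℝ ℝ V).prod D) ((0:ℝ), v) := by
        simp only [ContinuousLinearMap.prod_apply, ContinuousLinearMap.coe_fst', huv]
      exact congrArg Prod.snd (hP.1 h0)
    · intro w
      obtain ⟨z, hz⟩ := hP.2 ((0:ℝ), w)
      have hz1 : z.1 = 0 := congrArg Prod.fst hz
      have hz2 : D z = w := congrArg Prod.snd hz
      refine ⟨z.2, ?_⟩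
      rw [hBD, show ((0:ℝ), z.2) = z from Prod.ext hz1.symm rfl, hz2]
  · intro hB
    constructor
    · intro u v huv
      have huv' : (u.1, D u) = (v.1, D v) := huv
      injection huv' with h1 h2
      have h3 : D (0, u.2) = D (0, v.2) := by
        have hu := hsplit u
        have hv := hsplit v
        rw [h2, h1] at hu
        rw [hv] at hu
        exact (add_left_cancel hu.symm)
      have h4 : u.2 = v.2 := by
        apply hB.1
        rw [hBD, hBD, h3]
      exact Prod.ext h1 h4
    · intro w
      obtain ⟨v, hv⟩ := hB.2 (w.2 - D (w.1, 0))
      rw [hBD] at hv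
      refine ⟨(w.1, v), Prod.ext rfl ?_⟩
      show D (w.1, v) = w.2
      rw [hsplit (w.1, v)]
      simp [hv]

private theorem aux_main {E F : Type*}
    [NormedAddCommGroup E] [InnerProductSpace ℝ E] [FiniteDimensional ℝ E]
    [NormedAddCommGroup F] [InnerProductSpace ℝ F] [FiniteDimensional ℝ F]
    (f₁ f₂ ζ₁ ζ₂ : E → F → ℝ)
    (hf₁ : ContDiff ℝ (⊤ : ℕ∞) (fun p : E × F => f₁ p.1 p.2))
    (hf₂ : ContDiff ℝ (⊤ : ℕ∞) (fun p : E × F => f₂ p.1 p.2))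
    (hζ₁ : ContDiff ℝ (⊤ : ℕ∞) (fun p : E × F => ζ₁ p.1 p.2))
    (hζ₂ : ContDiff ℝ (⊤ : ℕ∞) (fun p : E × F => ζ₂ p.1 p.2))
    (ω : ℝ → E × F → E × F)
    (hωdef : ∀ s p, ω s p =
      (gradient (fun x => f₁ x p.2 + s * ζ₁ x p.2) p.1,
       gradient (fun y => f₂ p.1 y + s * ζ₂ p.1 y) p.2))
    (x : E) (y : F)
    (hzero : ω 0 (x, y) = 0)
    (hinv : Function.Bijective (fderiv ℝ (ω 0) (x, y))) :
    ∃ U ∈ nhds (0 : ℝ), ∃ W ∈ nhds ((x, y) : E × F),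
      ∃ σ : ℝ → E × F,
        ContDiffOn ℝ (⊤ : ℕ∞) σ U ∧ σ 0 = (x, y) ∧
        ∀ s ∈ U, σ s ∈ W ∧ ω s (σ s) = 0 ∧
          (∀ q ∈ W, ω s q = 0 → q = σ s) ∧
          Function.Bijective (fderiv ℝ (ω s) (σ s)) := by
  haveI : CompleteSpace E := FiniteDimensional.complete ℝ E
  haveI : CompleteSpace F := FiniteDimensional.complete ℝ F
  have h2a : ContDiff ℝ (⊤ : ℕ∞) (fun p : (ℝ × (E × F)) × E => (p.2, p.1.2.2)) :=
    contDiff_snd.prodMk ((contDiff_snd.comp contDiff_snd).comp contDiff_fst)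
  have h2b : ContDiff ℝ (⊤ : ℕ∞) (fun p : (ℝ × (E × F)) × F => (p.1.2.1, p.2)) :=
    ((contDiff_fst.comp contDiff_snd).comp contDiff_fst).prodMk contDiff_snd
  have key₁ : ContDiff ℝ (⊤ : ℕ∞) (fun q : ℝ × (E × F) =>
      gradient (fun x' => f₁ x' q.2.2 + q.1 * ζ₁ x' q.2.2) q.2.1) := by
    have key : ContDiff ℝ (⊤ : ℕ∞) (fun q : ℝ × (E × F) =>
        fderiv ℝ (fun x' => f₁ x' q.2.2 + q.1 * ζ₁ x' q.2.2) q.2.1) := by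
      apply ContDiff.fderiv (f := fun (q : ℝ × (E × F)) (x' : E) => f₁ x' q.2.2 + q.1 * ζ₁ x' q.2.2)
        (g := fun q : ℝ × (E × F) => q.2.1) ?_ (contDiff_fst.comp contDiff_snd) (m := ((⊤ : ℕ∞) : WithTop ℕ∞)) (by simp)
      show ContDiff ℝ (⊤ : ℕ∞) (fun p : (ℝ × (E × F)) × E => f₁ p.2 p.1.2.2 + p.1.1 * ζ₁ p.2 p.1.2.2)
      exact (hf₁.comp h2a).add ((contDiff_fst.comp contDiff_fst).mul (hζ₁.comp h2a))
    exact ((InnerProductSpace.toDual ℝ E).symm.contDiff).comp key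
  have key₂ : ContDiff ℝ (⊤ : ℕ∞) (fun q : ℝ × (E × F) =>
      gradient (fun y' => f₂ q.2.1 y' + q.1 * ζ₂ q.2.1 y') q.2.2) := by
    have key : ContDiff ℝ (⊤ : ℕ∞) (fun q : ℝ × (E × F) =>
        fderiv ℝ (fun y' => f₂ q.2.1 y' + q.1 * ζ₂ q.2.1 y') q.2.2) := by
      apply ContDiff.fderiv (f := fun (q : ℝ × (E × F)) (y' : F) => f₂ q.2.1 y' + q.1 * ζ₂ q.2.1 y')
        (g := fun q : ℝ × (E × F) => q.2.2) ?_ (contDiff_snd.comp contDiff_snd) (m := ((⊤ : ℕ∞) : WithTop ℕ∞)) (by simp)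
      show ContDiff ℝ (⊤ : ℕ∞) (fun p : (ℝ × (E × F)) × F => f₂ p.1.2.1 p.2 + p.1.1 * ζ₂ p.1.2.1 p.2)
      exact (hf₂.comp h2b).add ((contDiff_fst.comp contDiff_fst).mul (hζ₂.comp h2b))
    exact ((InnerProductSpace.toDual ℝ F).symm.contDiff).comp key
  have hΦ : ContDiff ℝ (⊤ : ℕ∞) (fun q : ℝ × (E × F) => ω q.1 q.2) := by
    have hre : (fun q : ℝ × (E × F) => ω q.1 q.2)
        = fun q : ℝ × (E × F) =>
          (gradient (fun x' => f₁ x' q.2.2 + q.1 * ζ₁ x' q.2.2) q.2.1,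
           gradient (fun y' => f₂ q.2.1 y' + q.1 * ζ₂ q.2.1 y') q.2.2) :=
      funext fun q => hωdef q.1 q.2
    rw [hre]
    exact key₁.prodMk key₂
  have hΦdiff : Differentiable ℝ (fun q : ℝ × (E × F) => ω q.1 q.2) :=
    hΦ.differentiable (by simp)
  have hG : ContDiff ℝ (⊤ : ℕ∞) (fun q : ℝ × (E × F) => (q.1, ω q.1 q.2)) := contDiff_fst.prodMk hΦ
  have hGderiv : ∀ q : ℝ × (E × F), HasFDerivAt (fun q : ℝ × (E × F) => (q.1, ω q.1 q.2))
      ((ContinuousLinearMap.fst ℝ ℝ (E × F)).prod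
        (fderiv ℝ (fun q : ℝ × (E × F) => ω q.1 q.2) q)) q :=
    fun q => HasFDerivAt.prodMk (hasFDerivAt_fst) (hΦdiff q).hasFDerivAt
  have hslice : ∀ (s : ℝ) (p : E × F), HasFDerivAt (ω s)
      ((fderiv ℝ (fun q : ℝ × (E × F) => ω q.1 q.2) (s, p)).comp
        (ContinuousLinearMap.inr ℝ ℝ (E × F))) p := by
    intro s p
    have h1 : HasFDerivAt (fun p' : E × F => ((s : ℝ), p'))
        (ContinuousLinearMap.inr ℝ ℝ (E × F)) p := hasFDerivAt_prodMk_right s p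
    exact ((hΦdiff (s, p)).hasFDerivAt).comp p h1
  have hfderivω : ∀ (s : ℝ) (p : E × F), fderiv ℝ (ω s) p
      = (fderiv ℝ (fun q : ℝ × (E × F) => ω q.1 q.2) (s, p)).comp
        (ContinuousLinearMap.inr ℝ ℝ (E × F)) :=
    fun s p => (hslice s p).fderiv
  have hDcont : Continuous (fderiv ℝ (fun q : ℝ × (E × F) => ω q.1 q.2)) :=
    (hΦ.fderiv_right (m := 0) (by simp)).continuous
  have hcompcont : Continuous (fun T : (ℝ × (E × F)) →L[ℝ] (E × F) =>
      T.comp (ContinuousLinearMap.inr ℝ ℝ (E × F))) := by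
    have hh : (fun T : (ℝ × (E × F)) →L[ℝ] (E × F) =>
        T.comp (ContinuousLinearMap.inr ℝ ℝ (E × F)))
        = ⇑((ContinuousLinearMap.compL ℝ (E × F) (ℝ × (E × F)) (E × F)).flip
            (ContinuousLinearMap.inr ℝ ℝ (E × F))) := rfl
    rw [hh]
    exact ContinuousLinearMap.continuous _
  have hSopen : IsOpen {q : ℝ × (E × F) |
      IsUnit ((fderiv ℝ (fun q : ℝ × (E × F) => ω q.1 q.2) q).comp
        (ContinuousLinearMap.inr ℝ ℝ (E × F)))} := by
    have hUopen : IsOpen {T : (E × F) →L[ℝ] (E × F) | IsUnit T} := Units.isOpen (R := (E × F) →L[ℝ] (E × F))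
    have h1 : {q : ℝ × (E × F) |
        IsUnit ((fderiv ℝ (fun q : ℝ × (E × F) => ω q.1 q.2) q).comp
          (ContinuousLinearMap.inr ℝ ℝ (E × F)))}
        = (fderiv ℝ (fun q : ℝ × (E × F) => ω q.1 q.2)) ⁻¹'
          ((fun T : (ℝ × (E × F)) →L[ℝ] (E × F) =>
            T.comp (ContinuousLinearMap.inr ℝ ℝ (E × F))) ⁻¹'
            {T : (E × F) →L[ℝ] (E × F) | IsUnit T}) := rfl
    rw [h1]
    exact (hUopen.preimage hcompcont).preimage hDcont
  have haS : (((0 : ℝ), ((x, y) : E × F)) : ℝ × (E × F)) ∈ {q : ℝ × (E × F) |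
      IsUnit ((fderiv ℝ (fun q : ℝ × (E × F) => ω q.1 q.2) q).comp
        (ContinuousLinearMap.inr ℝ ℝ (E × F)))} := by
    rw [Set.mem_setOf_eq, aux_isUnit_iff, ← hfderivω 0 (x, y)]
    exact hinv
  -- the equiv at the base point
  have hPa : Function.Bijective ((ContinuousLinearMap.fst ℝ ℝ (E × F)).prod
      (fderiv ℝ (fun q : ℝ × (E × F) => ω q.1 q.2) ((0 : ℝ), ((x, y) : E × F)))) := by
    rw [aux_block_bij, ← hfderivω 0 (x, y)]
    exact hinv
  obtain ⟨u₀, hu₀⟩ := (aux_isUnit_iff _).mpr hPa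
  have hGa' : HasFDerivAt (fun q : ℝ × (E × F) => (q.1, ω q.1 q.2))
      ((ContinuousLinearEquiv.unitsEquiv ℝ (ℝ × (E × F)) u₀ :
        (ℝ × (E × F)) ≃L[ℝ] (ℝ × (E × F))) : (ℝ × (E × F)) →L[ℝ] (ℝ × (E × F)))
      ((0 : ℝ), ((x, y) : E × F)) := by
    have hcoe : ((ContinuousLinearEquiv.unitsEquiv ℝ (ℝ × (E × F)) u₀ :
        (ℝ × (E × F)) ≃L[ℝ] (ℝ × (E × F))) : (ℝ × (E × F)) →L[ℝ] (ℝ × (E × F)))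
        = (ContinuousLinearMap.fst ℝ ℝ (E × F)).prod
          (fderiv ℝ (fun q : ℝ × (E × F) => ω q.1 q.2) ((0 : ℝ), ((x, y) : E × F))) := by
      rw [← hu₀]; rfl
    rw [hcoe]
    exact hGderiv _
  set e := hG.contDiffAt.toOpenPartialHomeomorph (fun q : ℝ × (E × F) => (q.1, ω q.1 q.2))
    hGa' (by simp) with he
  have ha_src : (((0 : ℝ), ((x, y) : E × F)) : ℝ × (E × F)) ∈ e.source :=
    hG.contDiffAt.mem_toOpenPartialHomeomorph_source hGa' (by simp)
  have hGa0 : (fun q : ℝ × (E × F) => (q.1, ω q.1 q.2)) ((0 : ℝ), ((x, y) : E × F))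
      = (((0 : ℝ), (0 : E × F)) : ℝ × (E × F)) := by
    show (((0 : ℝ), ω 0 (x, y)) : ℝ × (E × F)) = ((0 : ℝ), (0 : E × F))
    rw [hzero]
  have hb_tgt : (((0 : ℝ), (0 : E × F)) : ℝ × (E × F)) ∈ e.target := by
    rw [← hGa0]
    exact e.map_source ha_src
  have hsymm_b : e.symm (((0 : ℝ), (0 : E × F)) : ℝ × (E × F))
      = (((0 : ℝ), ((x, y) : E × F)) : ℝ × (E × F)) := by
    rw [← hGa0]
    exact e.left_inv ha_src
  set t := e.target ∩ e.symm ⁻¹' ({q : ℝ × (E × F) |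
      IsUnit ((fderiv ℝ (fun q : ℝ × (E × F) => ω q.1 q.2) q).comp
        (ContinuousLinearMap.inr ℝ ℝ (E × F)))} ∩ e.source) with ht
  have ht_open : IsOpen t := e.isOpen_inter_preimage_symm (hSopen.inter e.open_source)
  have hb_t : (((0 : ℝ), (0 : E × F)) : ℝ × (E × F)) ∈ t := by
    refine ⟨hb_tgt, ?_⟩
    rw [Set.mem_preimage, hsymm_b]
    exact ⟨haS, ha_src⟩
  have hsymm_smooth : ContDiffOn ℝ (⊤ : ℕ∞) e.symm t := by
    intro z hz
    have hzS : IsUnit ((fderiv ℝ (fun q : ℝ × (E × F) => ω q.1 q.2) (e.symm z)).comp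
        (ContinuousLinearMap.inr ℝ ℝ (E × F))) := hz.2.1
    obtain ⟨u, hu⟩ := (aux_isUnit_iff _).mpr
      ((aux_block_bij _).mpr ((aux_isUnit_iff _).mp hzS))
    have hder : HasFDerivAt (⇑e)
        ((ContinuousLinearEquiv.unitsEquiv ℝ (ℝ × (E × F)) u :
          (ℝ × (E × F)) ≃L[ℝ] (ℝ × (E × F))) : (ℝ × (E × F)) →L[ℝ] (ℝ × (E × F)))
        (e.symm z) := by
      have hcoe : ((ContinuousLinearEquiv.unitsEquiv ℝ (ℝ × (E × F)) u :
          (ℝ × (E × F)) ≃L[ℝ] (ℝ × (E × F))) : (ℝ × (E × F)) →L[ℝ] (ℝ × (E × F)))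
          = (ContinuousLinearMap.fst ℝ ℝ (E × F)).prod
            (fderiv ℝ (fun q : ℝ × (E × F) => ω q.1 q.2) (e.symm z)) := by
        rw [← hu]; rfl
      rw [hcoe]
      exact hGderiv _
    exact (e.contDiffAt_symm hz.1 hder hG.contDiffAt).contDiffWithinAt
  -- σ and U₁
  set σ : ℝ → E × F := fun s => (e.symm ((s, (0 : E × F)) : ℝ × (E × F))).2 with hσdef
  set U₁ : Set ℝ := (fun s : ℝ => ((s, (0 : E × F)) : ℝ × (E × F))) ⁻¹' t with hU₁
  have hU₁open : IsOpen U₁ := ht_open.preimage (continuous_id.prodMk continuous_const)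
  have h0U₁ : (0 : ℝ) ∈ U₁ := hb_t
  have hσ_smooth : ContDiffOn ℝ (⊤ : ℕ∞) σ U₁ := by
    have hj : ContDiff ℝ (⊤ : ℕ∞) (fun s : ℝ => ((s, (0 : E × F)) : ℝ × (E × F))) :=
      contDiff_id.prodMk contDiff_const
    have hc : ContDiffOn ℝ (⊤ : ℕ∞) (fun s : ℝ => e.symm ((s, (0 : E × F)) : ℝ × (E × F))) U₁ :=
      hsymm_smooth.comp hj.contDiffOn (fun s hs => hs)
    exact contDiff_snd.comp_contDiffOn hc
  have hσ0 : σ 0 = (x, y) := by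
    show (e.symm (((0 : ℝ), (0 : E × F)) : ℝ × (E × F))).2 = (x, y)
    rw [hsymm_b]
  have hkey : ∀ s : ℝ, s ∈ U₁ → ω s (σ s) = 0 ∧
      Function.Bijective (fderiv ℝ (ω s) (σ s)) ∧ ((s, σ s) : ℝ × (E × F)) ∈ e.source := by
    intro s hs
    have hzt : ((s, (0 : E × F)) : ℝ × (E × F)) ∈ t := hs
    have hGz : (fun q : ℝ × (E × F) => (q.1, ω q.1 q.2)) (e.symm ((s, (0 : E × F)) : ℝ × (E × F)))
        = ((s, (0 : E × F)) : ℝ × (E × F)) := e.right_inv hzt.1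
    have h1 : (e.symm ((s, (0 : E × F)) : ℝ × (E × F))).1 = s := congrArg Prod.fst hGz
    have hps : e.symm ((s, (0 : E × F)) : ℝ × (E × F)) = ((s, σ s) : ℝ × (E × F)) :=
      Prod.ext h1 rfl
    have hω0 : ω s (σ s) = 0 := by
      have h2 := congrArg Prod.snd hGz
      rw [hps] at h2
      exact h2
    have hmem := hzt.2
    rw [Set.mem_preimage] at hmem
    have hSx : IsUnit ((fderiv ℝ (fun q : ℝ × (E × F) => ω q.1 q.2)
        ((s, σ s) : ℝ × (E × F))).comp (ContinuousLinearMap.inr ℝ ℝ (E × F))) := by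
      have := hmem.1
      rwa [hps] at this
    have hbij : Function.Bijective (fderiv ℝ (ω s) (σ s)) := by
      rw [hfderivω s (σ s)]
      exact (aux_isUnit_iff _).mp hSx
    exact ⟨hω0, hbij, hps ▸ hmem.2⟩
  obtain ⟨U₂, hU₂, W, hW, hsub⟩ := mem_nhds_prod_iff.mp (e.open_source.mem_nhds ha_src)
  have hσcont : ContinuousAt σ 0 :=
    hσ_smooth.continuousOn.continuousAt (hU₁open.mem_nhds h0U₁)
  have hU₃ : σ ⁻¹' W ∈ nhds (0 : ℝ) := hσcont.preimage_mem_nhds (by rw [hσ0]; exact hW)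
  refine ⟨U₁ ∩ U₂ ∩ σ ⁻¹' W,
    Filter.inter_mem (Filter.inter_mem (hU₁open.mem_nhds h0U₁) hU₂) hU₃, W, hW, σ,
    hσ_smooth.mono (fun s hs => hs.1.1), hσ0, ?_⟩
  rintro s ⟨⟨hs₁, hs₂⟩, hs₃⟩
  obtain ⟨hω0, hbij, hσsrc⟩ := hkey s hs₁
  refine ⟨hs₃, hω0, ?_, hbij⟩
  intro q hq hq0
  have hsq_src : ((s, q) : ℝ × (E × F)) ∈ e.source := hsub (Set.mk_mem_prod hs₂ hq)
  have hGeq : (fun q' : ℝ × (E × F) => (q'.1, ω q'.1 q'.2)) ((s, q) : ℝ × (E × F))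
      = (fun q' : ℝ × (E × F) => (q'.1, ω q'.1 q'.2)) ((s, σ s) : ℝ × (E × F)) := by
    show ((s, ω s q) : ℝ × (E × F)) = ((s, ω s (σ s)) : ℝ × (E × F))
    rw [hq0, hω0]
  have hqq := e.injOn hsq_src hσsrc hGeq
  exact congrArg Prod.snd hqq

theorem stmt_10
    (m n : ℕ)
    (f₁ f₂ ζ₁ ζ₂ : EuclideanSpace ℝ (Fin m) → EuclideanSpace ℝ (Fin n) → ℝ)
    (hf₁ : ContDiff ℝ (⊤ : ℕ∞) (fun p : EuclideanSpace ℝ (Fin m) × EuclideanSpace ℝ (Fin n) => f₁ p.1 p.2))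
    (hf₂ : ContDiff ℝ (⊤ : ℕ∞) (fun p : EuclideanSpace ℝ (Fin m) × EuclideanSpace ℝ (Fin n) => f₂ p.1 p.2))
    (hζ₁ : ContDiff ℝ (⊤ : ℕ∞) (fun p : EuclideanSpace ℝ (Fin m) × EuclideanSpace ℝ (Fin n) => ζ₁ p.1 p.2))
    (hζ₂ : ContDiff ℝ (⊤ : ℕ∞) (fun p : EuclideanSpace ℝ (Fin m) × EuclideanSpace ℝ (Fin n) => ζ₂ p.1 p.2))
    (ω : ℝ → EuclideanSpace ℝ (Fin m) × EuclideanSpace ℝ (Fin n) →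
         EuclideanSpace ℝ (Fin m) × EuclideanSpace ℝ (Fin n))
    (hωdef : ∀ s p, ω s p =
      (gradient (fun x => f₁ x p.2 + s * ζ₁ x p.2) p.1,
       gradient (fun y => f₂ p.1 y + s * ζ₂ p.1 y) p.2))
    (x : EuclideanSpace ℝ (Fin m)) (y : EuclideanSpace ℝ (Fin n))
    (hzero : ω 0 (x, y) = 0)
    (hH₁ : ∀ v : EuclideanSpace ℝ (Fin m), v ≠ 0 →
      0 < (inner ℝ (fderiv ℝ (fun x' => gradient (fun x'' => f₁ x'' y) x') x v) v : ℝ))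
    (hH₂ : ∀ w : EuclideanSpace ℝ (Fin n), w ≠ 0 →
      0 < (inner ℝ (fderiv ℝ (fun y' => gradient (fun y'' => f₂ x y'') y') y w) w : ℝ))
    (hinv : Function.Bijective (fderiv ℝ (ω 0) (x, y))) :
    ∃ U ∈ nhds (0 : ℝ), ∃ W ∈ nhds ((x, y) : EuclideanSpace ℝ (Fin m) × EuclideanSpace ℝ (Fin n)),
      ∃ σ : ℝ → EuclideanSpace ℝ (Fin m) × EuclideanSpace ℝ (Fin n),
        ContDiffOn ℝ (⊤ : ℕ∞) σ U ∧ σ 0 = (x, y) ∧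
        ∀ s ∈ U, σ s ∈ W ∧ ω s (σ s) = 0 ∧
          (∀ q ∈ W, ω s q = 0 → q = σ s) ∧
          Function.Bijective (fderiv ℝ (ω s) (σ s)) := by
  exact aux_main f₁ f₂ ζ₁ ζ₂ hf₁ hf₂ hζ₁ hζ₂ ω hωdef x y hzero hinv
end

section
/- Non-degeneracy of a differential Nash equilibrium does not follow from positive definiteness of the partial Hessians: there exist C² functions f₁, f₂ : ℝ × ℝ → ℝ and a point u with ∂f₁/∂u₁(u) = ∂f₂/∂u₂(u) = 0, ∂²f₁/∂u₁²(u) > 0, ∂²f₂/∂u₂²(u) > 0, but with singular Jacobian dω(u) of ω = (∂f₁/∂u₁, ∂f₂/∂u₂). (Witness: f₁ = u₁²/2 − u₁u₂, f₂ = u₂²/2 − u₁u₂ at u = (0,0).) -/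
/-!
Take the two players' costs `f₁ = cost u₁ u₂` and `f₂ = cost u₂ u₁` with `cost x c = x² / 2 - x c`.
Then `ω(u₁, u₂) = (u₁ - u₂, u₂ - u₁)` vanishes at the origin and both own second partials equal `1`,
but `dω = !![1, -1; -1, 1]` has determinant `0`.
-/

namespace NashCounterexample

noncomputable def cost (x c : ℝ) : ℝ := x ^ 2 / 2 - x * c

theorem contDiff_cost : ContDiff ℝ 2 (fun z : ℝ × ℝ => cost z.1 z.2) := by
  unfold cost; fun_prop

theorem contDiff_cost_swap : ContDiff ℝ 2 (fun z : ℝ × ℝ => cost z.2 z.1) := by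
  unfold cost; fun_prop

theorem deriv_cost (c : ℝ) : deriv (fun x => cost x c) = fun x => x - c := by
  funext x
  unfold cost
  rw [deriv_fun_sub (by fun_prop) (by fun_prop)]
  simp

theorem deriv_deriv_cost (c x₀ : ℝ) :
    deriv (fun x => deriv (fun y => cost y c) x) x₀ = 1 := by
  rw [deriv_cost]
  simp

theorem deriv_deriv_cost_param (x c : ℝ) :
    deriv (fun c => deriv (fun x => cost x c) x) c = -1 := by
  simp only [deriv_cost]
  simp

end NashCounterexample

open NashCounterexample in
theorem stmt_17 :
    ∃ (f₁ f₂ : ℝ → ℝ → ℝ) (p q : ℝ),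
      ContDiff ℝ 2 (fun z : ℝ × ℝ => f₁ z.1 z.2) ∧
      ContDiff ℝ 2 (fun z : ℝ × ℝ => f₂ z.1 z.2) ∧
      deriv (fun u₁ => f₁ u₁ q) p = 0 ∧
      deriv (fun u₂ => f₂ p u₂) q = 0 ∧
      0 < deriv (fun u₁ => deriv (fun u₁' => f₁ u₁' q) u₁) p ∧
      0 < deriv (fun u₂ => deriv (fun u₂' => f₂ p u₂') u₂) q ∧
      ¬ IsUnit (Matrix.det
        !![deriv (fun u₁ => deriv (fun u₁' => f₁ u₁' q) u₁) p,
           deriv (fun u₂ => deriv (fun u₁' => f₁ u₁' u₂) p) q;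
           deriv (fun u₁ => deriv (fun u₂' => f₂ u₁ u₂') q) p,
           deriv (fun u₂ => deriv (fun u₂' => f₂ p u₂') u₂) q]) := by
  refine ⟨cost, fun u₁ u₂ => cost u₂ u₁, 0, 0, contDiff_cost, contDiff_cost_swap, ?_⟩
  -- the second partials first: `deriv_cost` would otherwise rewrite their inner derivatives
  simp only [deriv_deriv_cost, deriv_deriv_cost_param]
  simp only [deriv_cost, Matrix.det_fin_two_of]
  norm_num
end

section
/- A strict local Nash equilibrium need not be an isolated Nash equilibrium: in the game f₁(u₁,u₂) = u₁²/2 − u₁u₂, f₂(u₁,u₂) = u₂²/2 − u₁u₂ on ℝ², every point (q,q) is a strict local Nash equilibrium, yet every neighborhood of (q,q) contains other Nash equilibria (q',q') with q' ≠ q. -/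
theorem stmt_18
    (f₁ f₂ : ℝ → ℝ → ℝ)
    (hf₁ : ∀ u₁ u₂, f₁ u₁ u₂ = u₁ ^ 2 / 2 - u₁ * u₂)
    (hf₂ : ∀ u₁ u₂, f₂ u₁ u₂ = u₂ ^ 2 / 2 - u₁ * u₂) :
    ∀ q : ℝ,
      ((∃ U ∈ nhds q, ∃ V ∈ nhds q,
        (∀ u₁ ∈ U, u₁ ≠ q → f₁ q q < f₁ u₁ q) ∧
        (∀ u₂ ∈ V, u₂ ≠ q → f₂ q q < f₂ q u₂))) ∧
      (∀ W ∈ nhds ((q, q) : ℝ × ℝ), ∃ q' : ℝ, q' ≠ q ∧ ((q', q') : ℝ × ℝ) ∈ W ∧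
        (∀ u₁ : ℝ, f₁ q' q' ≤ f₁ u₁ q') ∧ (∀ u₂ : ℝ, f₂ q' q' ≤ f₂ q' u₂)) := by
  intro q
  have key1 : ∀ a b u : ℝ, f₁ a b ≤ f₁ u b ↔ 0 ≤ (u - b) ^ 2 / 2 - (a - b) ^ 2 / 2 := by
    intro a b u; rw [hf₁, hf₁]; constructor <;> intro h <;> nlinarith
  constructor
  · refine ⟨Set.univ, Filter.univ_mem, Set.univ, Filter.univ_mem, ?_, ?_⟩
    · intro u _ hu
      rw [hf₁, hf₁]
      have : u - q ≠ 0 := sub_ne_zero.mpr hu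
      nlinarith [pow_pos (abs_pos.mpr this) 2, sq_abs (u - q)]
    · intro u _ hu
      rw [hf₂, hf₂]
      have : u - q ≠ 0 := sub_ne_zero.mpr hu
      nlinarith [pow_pos (abs_pos.mpr this) 2, sq_abs (u - q)]
  · intro W hW
    have hc : Continuous fun x : ℝ => ((x, x) : ℝ × ℝ) := by continuity
    have hpre : (fun x : ℝ => ((x, x) : ℝ × ℝ)) ⁻¹' W ∈ nhds q := by
      exact hc.continuousAt.preimage_mem_nhds (by simpa using hW)
    have : ((fun x : ℝ => ((x, x) : ℝ × ℝ)) ⁻¹' W) ∈ nhdsWithin q {q}ᶜ :=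
      mem_nhdsWithin_of_mem_nhds hpre
    obtain ⟨q', hq'W, hq'ne⟩ := Filter.nonempty_of_mem (Filter.inter_mem this self_mem_nhdsWithin)
    exact ⟨q', hq'ne, hq'W, fun u => by rw [hf₁, hf₁]; nlinarith [sq_nonneg (u - q')],
      fun u => by rw [hf₂, hf₂]; nlinarith [sq_nonneg (u - q')]⟩
end
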